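/- arXiv:2011.14523 — 7 statements merged into one kernel-verified Lean document; each statement's English description precedes it below -/
import Mathlib

section
/- Let p be a prime, N a positive integer with gcd(N,p)=1, and f the multiplicative order of p modulo N. If Σ_{i=0}^{f-1} [t p^i]_N = fN/2 for every integer t coprime to N (where [x]_N denotes the least nonnegative residue of x mod N), and f is odd, then N ≡ 2 (mod 4), i.e., 2 exactly divides N. -/
/-!
Taking `t = 1`, purity says `2 S = f N` with `S = ∑_{i < f} [p^i]_N`. As `f` is odd, `N` is even,
so `p` (a unit mod `N`) is odd and every residue `[p^i]_N` is odd. Hence `S`, a sum of an odd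
number of odd terms, is odd, and `S = f · (N / 2)` forces `N / 2` to be odd.
-/

open Finset

theorem Finset.odd_sum_of_odd_card {ι R : Type*} [Semiring R] {s : Finset ι} {a : ι → R}
    (hs : Odd #s) (ha : ∀ i ∈ s, Odd (a i)) : Odd (∑ i ∈ s, a i) := by
  choose! k hk using ha
  rw [sum_congr rfl hk, sum_add_distrib, ← mul_sum, sum_const, nsmul_one]
  exact (even_two_mul _).add_odd hs.natCast

theorem Int.odd_emod_iff_of_even {x N : ℤ} (hN : Even N) : Odd (x % N) ↔ Odd x := by
  rw [Int.odd_iff, Int.odd_iff, Int.emod_emod_of_dvd _ hN.two_dvd]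

theorem stmt_4_general (p N : ℕ) (hcop : Nat.Coprime N p) (f : ℕ)
    (hpure : ∀ t : ℤ, Int.gcd t N = 1 →
      2 * ∑ i ∈ Finset.range f, (t * (p : ℤ) ^ i) % N = (f : ℤ) * N)
    (hodd : Odd f) :
    N % 4 = 2 := by
  have hsum := hpure 1 (by simp)
  simp only [one_mul] at hsum
  have hN : Even N := by
    have hfN : Even ((f : ℤ) * N) := ⟨_, hsum.symm.trans (two_mul _)⟩
    exact_mod_cast (Int.even_mul.mp hfN).resolve_left (Int.not_even_iff_odd.mpr hodd.natCast)
  have hp : Odd p := (Nat.Coprime.coprime_dvd_left hN.two_dvd hcop).odd_of_left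
  have hS : Odd (∑ i ∈ range f, (p : ℤ) ^ i % N) :=
    odd_sum_of_odd_card (by simpa using hodd) fun i _ ↦
      (Int.odd_emod_iff_of_even (by exact_mod_cast hN)).mpr (hp.natCast.pow)
  obtain ⟨n, rfl⟩ := hN
  have hSn : ∑ i ∈ range f, (p : ℤ) ^ i % ↑(n + n) = f * n := by
    push_cast at hsum ⊢
    linarith
  obtain ⟨j, hj⟩ := (Int.odd_mul.mp (hSn ▸ hS)).2
  omega

/-- If the Gauss sum `G_{p^f}(η_N)` is pure (Stickelberger criterion) and `f` is odd,
then `2 ‖ N`, i.e. `N ≡ 2 (mod 4)`. -/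
theorem stmt_4 (p N : ℕ) (hp : p.Prime) (hN : 0 < N) (hcop : Nat.Coprime N p)
    (f : ℕ) (hf : f = orderOf ((p : ZMod N)))
    (hpure : ∀ t : ℤ, Int.gcd t N = 1 →
      2 * ∑ i ∈ Finset.range f, (t * (p : ℤ) ^ i) % N = (f : ℤ) * N)
    (hodd : Odd f) :
    N % 4 = 2 :=
  stmt_4_general p N hcop f hpure hodd
end

section
/- Let p be a prime, N a positive integer with gcd(N,p)=1, f the multiplicative order of p modulo N, and suppose Σ_{i=0}^{f-1} [t p^i]_N = fN/2 for every integer t coprime to N. If f is odd, then N/2 divides (p^f - 1)/(p - 1). -/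
/-- If the Gauss sum `G_{p^f}(η_N)` is pure (Stickelberger criterion) and `f` is odd,
then `N/2` divides `(p^f - 1)/(p - 1)`. -/
theorem stmt_5 (p N : ℕ) (hp : p.Prime) (hN : 0 < N) (hcop : Nat.Coprime N p)
    (f : ℕ) (hf : f = orderOf ((p : ZMod N)))
    (hpure : ∀ t : ℤ, Int.gcd t N = 1 →
      2 * ∑ i ∈ Finset.range f, (t * (p : ℤ) ^ i) % N = (f : ℤ) * N)
    (hodd : Odd f) :
    N / 2 ∣ (p ^ f - 1) / (p - 1) := by
  have hp2 := hp.two_le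
  set S : ℕ := ∑ i ∈ Finset.range f, p ^ i with hS
  have h1 := hpure 1 (by simp)
  simp only [one_mul] at h1
  -- N is even
  have hNeven : 2 ∣ N := by
    have h2 : (2:ℤ) ∣ (f:ℤ) * N := ⟨_, h1.symm⟩
    rcases ((Int.Prime.dvd_mul' Nat.prime_two h2)) with h | h
    · exfalso
      have : (2:ℕ) ∣ f := by exact_mod_cast h
      exact (Nat.not_even_iff_odd.mpr hodd) (even_iff_two_dvd.mpr this)
    · exact_mod_cast h
  -- N ∣ 2 * S (in ℤ)
  have hdiff : (N:ℤ) ∣ 2 * (S:ℤ) - (f:ℤ) * N := by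
    have heq : 2 * (S:ℤ) - (f:ℤ) * N
        = 2 * ∑ i ∈ Finset.range f, ((p:ℤ) ^ i - (p:ℤ) ^ i % N) := by
      rw [← h1]
      push_cast [hS]
      rw [Finset.sum_sub_distrib]
      ring
    rw [heq]
    refine Dvd.dvd.mul_left (Finset.dvd_sum fun i _ => ?_) 2
    exact Int.dvd_self_sub_of_emod_eq rfl
  have hND : (N:ℤ) ∣ 2 * (S:ℤ) := by
    have := dvd_add hdiff (Dvd.intro_left (f:ℤ) rfl)
    simpa using this
  have hNDn : N ∣ 2 * S := by exact_mod_cast hND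
  -- N/2 ∣ S
  have hhalf : N / 2 ∣ S := by
    obtain ⟨m, hm⟩ := hNeven
    subst hm
    rw [Nat.mul_div_cancel_left m (by norm_num)]
    exact (Nat.mul_dvd_mul_iff_left (by norm_num : 0 < 2)).mp hNDn
  -- (p^f - 1)/(p - 1) = S
  have hgeom : (p - 1) * S = p ^ f - 1 := by
    have hz : ((p:ℤ) - 1) * (S:ℤ) = (p:ℤ) ^ f - 1 := by
      rw [hS]
      push_cast
      exact mul_geom_sum (p:ℤ) f
    have h1p : 1 ≤ p ^ f := Nat.one_le_pow _ _ (by omega)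
    have : ((p - 1) * S : ℕ) = ((p ^ f - 1 : ℕ) : ℤ) := by
      push_cast [Nat.cast_sub (by omega : 1 ≤ p), Nat.cast_sub h1p]
      exact hz
    exact_mod_cast this
  rw [← hgeom, Nat.mul_div_cancel_left S (by omega : 0 < p - 1)]
  exact hhalf
end

section
/- Let p be a prime, N a positive integer with gcd(N,p)=1, f the multiplicative order of p modulo N, and suppose Σ_{i=0}^{f-1} [t p^i]_N = fN/2 for every integer t coprime to N. If f is even, then N divides (p^f - 1)/(p - 1). -/
/-- If the Gauss sum `G_{p^f}(η_N)` is pure (Stickelberger criterion) and `f` is even,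
then `N` divides `(p^f - 1)/(p - 1)`. -/
theorem stmt_6 (p N : ℕ) (hp : p.Prime) (hN : 0 < N) (hcop : Nat.Coprime N p)
    (f : ℕ) (hf : f = orderOf ((p : ZMod N)))
    (hpure : ∀ t : ℤ, Int.gcd t N = 1 →
      2 * ∑ i ∈ Finset.range f, (t * (p : ℤ) ^ i) % N = (f : ℤ) * N)
    (heven : Even f) :
    N ∣ (p ^ f - 1) / (p - 1) := by
  rw [← Nat.geomSum_eq hp.two_le f]
  have h1 := hpure 1 (by simp)
  simp only [one_mul] at h1
  obtain ⟨k, hk⟩ := heven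
  have hS : ∑ i ∈ Finset.range f, (p : ℤ) ^ i % N = k * N := by
    have h2 : (2 : ℤ) * ∑ i ∈ Finset.range f, (p : ℤ) ^ i % N = 2 * (k * N) := by
      rw [h1, hk]; push_cast; ring
    linarith
  have hdvd : (N : ℤ) ∣ ∑ i ∈ Finset.range f, (p : ℤ) ^ i := by
    apply Int.dvd_of_emod_eq_zero
    rw [Finset.sum_int_mod, hS]
    simp
  have : (N : ℤ) ∣ ((∑ i ∈ Finset.range f, p ^ i : ℕ) : ℤ) := by push_cast; exact hdvd
  exact_mod_cast this
end

section
/- Let p be a prime and N a positive integer with gcd(N,p)=1. If there exists an integer s with p^s ≡ -1 (mod N), then for every integer t coprime to N, Σ_{i=0}^{f-1} [t p^i]_N = fN/2, where f is the multiplicative order of p modulo N (which is even). -/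
open Finset

private lemma shift_sum (g : ℕ → ℤ) (f : ℕ) (hg : ∀ i, g (i + f) = g i) :
    ∀ s : ℕ, ∑ i ∈ range f, g (i + s) = ∑ i ∈ range f, g i := by
  intro s
  induction s with
  | zero => simp
  | succ s ih =>
    have h1 : ∑ i ∈ range (f + 1), g (i + s) =
        (∑ i ∈ range f, g (i + 1 + s)) + g (0 + s) :=
      Finset.sum_range_succ' (fun i => g (i + s)) f
    have h2 : ∑ i ∈ range (f + 1), g (i + s) =
        (∑ i ∈ range f, g (i + s)) + g (f + s) :=
      Finset.sum_range_succ (fun i => g (i + s)) f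
    have h3 : g (f + s) = g (0 + s) := by
      have := hg s
      simpa [Nat.add_comm] using this
    have h4 : ∑ i ∈ range f, g (i + (s + 1)) = ∑ i ∈ range f, g (i + 1 + s) :=
      Finset.sum_congr rfl (fun i _ => by ring_nf)
    rw [h4, ← ih]
    linarith [h1, h2, h3]

private lemma neg_emod_eq (a : ℤ) (N : ℕ) (hN : 1 < N) (hcop : IsCoprime a (N : ℤ)) :
    (-a) % N = (N : ℤ) - a % N := by
  have hN0 : (0 : ℤ) < N := by exact_mod_cast Nat.lt_of_lt_of_le Nat.one_pos hN.le
  have hNunit : ¬ IsUnit (N : ℤ) := by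
    rw [Int.isUnit_iff]
    omega
  have ha : a % N ≠ 0 := by
    intro h
    exact hNunit (hcop.isUnit_of_dvd' (Int.dvd_of_emod_eq_zero h) dvd_rfl)
  have hna : (-a) % N ≠ 0 := by
    intro h
    have : (N : ℤ) ∣ -a := Int.dvd_of_emod_eq_zero h
    exact hNunit (hcop.isUnit_of_dvd' ((dvd_neg).mp this) dvd_rfl)
  have b1 : 0 ≤ a % N := Int.emod_nonneg a (by omega)
  have b2 : a % N < N := Int.emod_lt_of_pos a hN0
  have b3 : 0 ≤ (-a) % N := Int.emod_nonneg (-a) (by omega)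
  have b4 : (-a) % N < N := Int.emod_lt_of_pos (-a) hN0
  have hdvd : (N : ℤ) ∣ (a % N + (-a) % N) := by
    have : (a % N + (-a) % N) % N = 0 := by
      rw [← Int.add_emod]
      simp
    exact Int.dvd_of_emod_eq_zero this
  obtain ⟨c, hc⟩ := hdvd
  have b1' : 0 < a % N := b1.lt_of_ne (Ne.symm ha)
  have b3' : 0 < (-a) % N := b3.lt_of_ne (Ne.symm hna)
  have hc1 : c = 1 := by nlinarith
  rw [hc1, mul_one] at hc
  linarith

/-- Semi-primitive Gauss sums are pure: if `p^s ≡ -1 (mod N)` for some `s`, then the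
Stickelberger purity criterion holds for `N`. -/
theorem stmt_7 (p N : ℕ) (hp : p.Prime) (hN : 1 < N) (hcop : Nat.Coprime N p)
    (s : ℕ) (hs : ((p : ZMod N)) ^ s = -1)
    (f : ℕ) (hf : f = orderOf ((p : ZMod N))) :
    ∀ t : ℤ, Int.gcd t N = 1 →
      2 * ∑ i ∈ Finset.range f, (t * (p : ℤ) ^ i) % N = (f : ℤ) * N := by
  intro t ht
  set g : ℕ → ℤ := fun i => (t * (p : ℤ) ^ i) % N with hgdef
  have hcopt : IsCoprime t (N : ℤ) := Int.isCoprime_iff_gcd_eq_one.mpr ht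
  have hcopp : IsCoprime ((p : ℤ)) (N : ℤ) := by
    rw [Int.isCoprime_iff_gcd_eq_one]
    simpa [Int.gcd_natCast_natCast] using hcop.symm
  have hcopa : ∀ i : ℕ, IsCoprime (t * (p : ℤ) ^ i) (N : ℤ) :=
    fun i => IsCoprime.mul_left hcopt (hcopp.pow_left)
  -- periodicity
  have hpf : ((p : ZMod N)) ^ f = 1 := hf ▸ pow_orderOf_eq_one _
  have hper : ∀ i, g (i + f) = g i := by
    intro i
    have hcast : ((t * (p : ℤ) ^ (i + f) : ℤ) : ZMod N) = ((t * (p : ℤ) ^ i : ℤ) : ZMod N) := by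
      push_cast
      rw [pow_add, hpf]
      ring
    have hmod : (t * (p : ℤ) ^ (i + f)) % N = (t * (p : ℤ) ^ i) % N :=
      (ZMod.intCast_eq_intCast_iff _ _ _).mp hcast
    simpa [hgdef] using hmod
  -- pairing
  have key : ∀ i, g i + g (i + s) = N := by
    intro i
    have hcast : ((t * (p : ℤ) ^ (i + s) : ℤ) : ZMod N) = ((-(t * (p : ℤ) ^ i) : ℤ) : ZMod N) := by
      push_cast
      rw [pow_add, hs]
      ring
    have hmod : (t * (p : ℤ) ^ (i + s)) % N = (-(t * (p : ℤ) ^ i)) % N :=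
      (ZMod.intCast_eq_intCast_iff _ _ _).mp hcast
    have hneg : (-(t * (p : ℤ) ^ i)) % N = (N : ℤ) - (t * (p : ℤ) ^ i) % N :=
      neg_emod_eq _ N hN (hcopa i)
    simp only [hgdef]
    rw [hmod, hneg]
    ring
  have hshift : ∑ i ∈ range f, g (i + s) = ∑ i ∈ range f, g i := shift_sum g f hper s
  calc 2 * ∑ i ∈ range f, g i = (∑ i ∈ range f, g i) + ∑ i ∈ range f, g (i + s) := by
        rw [hshift]; ring
    _ = ∑ i ∈ range f, (g i + g (i + s)) := (Finset.sum_add_distrib).symm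
    _ = ∑ i ∈ range f, (N : ℤ) := Finset.sum_congr rfl (fun i _ => key i)
    _ = (f : ℤ) * N := by simp [mul_comm]
end

section
/- Let N = 2m with m odd, p an odd prime coprime to N, and f the multiplicative order of p modulo N. If there exists an integer j with p^j ≡ 2 (mod m), then for every integer t coprime to N, Σ_{i=0}^{f-1} [t p^i]_N = fN/2. -/
/-!
Write `a i = [t pⁱ]_{2m}` and `r i = [t pⁱ]_m`. Since `t pⁱ` is odd, `a i` is whichever of
`r i`, `r i + m` is odd, and since `pʲ ≡ 2 (mod m)`, `r (i + j) = [2 r i]_m`. Checking the two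
cases `2 r i < m` and `2 r i ≥ m` gives `a (i + j) + 2 r i = 2 r (i + j) + m`. Both `a` and `r`
are `f`-periodic, so summing over `i < f` the shift by `j` disappears and `∑ a i = f m`.
-/

open Finset Function

theorem Function.Periodic.sum_range_comp_add {M : Type*} [AddCommMonoid M] {F : ℕ → M} {f : ℕ}
    (hF : Periodic F f) (j : ℕ) : ∑ i ∈ range f, F (i + j) = ∑ i ∈ range f, F i := by
  calc ∑ i ∈ range f, F (i + j) = ∑ i ∈ Ico j (j + f), F (i % f) := by
        rw [sum_Ico_eq_sum_range, Nat.add_sub_cancel_left]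
        exact sum_congr rfl fun i _ => by rw [hF.map_mod_nat, add_comm]
    _ = ∑ i ∈ range f, F i := by
        rw [sum_eq_multiset_sum, sum_eq_multiset_sum, range_val, ← Nat.multiset_Ico_map_mod j f,
          Multiset.map_map]
        rfl

theorem Int.emod_eq_self_or_sub {a m : ℤ} (h0 : 0 ≤ a) (h : a < 2 * m) :
    a % m = a ∨ a % m = a - m := by
  rcases lt_or_ge a m with ham | hma
  · exact .inl (Int.emod_eq_of_lt h0 ham)
  · exact .inr (by rw [← Int.sub_emod_right, Int.emod_eq_of_lt (by omega) (by omega)])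

theorem Int.emod_two_mul_add_two_mul_emod {m x y : ℤ} (hm0 : 0 < m) (hm : Odd m) (hy : Odd y)
    (hxy : y ≡ 2 * x [ZMOD m]) : y % (2 * m) + 2 * (x % m) = 2 * (y % m) + m := by
  have hr : 0 ≤ x % m ∧ x % m < m := ⟨Int.emod_nonneg _ hm0.ne', Int.emod_lt_of_pos _ hm0⟩
  have ha : 0 ≤ y % (2 * m) ∧ y % (2 * m) < 2 * m :=
    ⟨Int.emod_nonneg _ (by omega), Int.emod_lt_of_pos _ (by omega)⟩
  have ha_odd : y % (2 * m) % 2 = 1 := by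
    rw [Int.emod_emod_of_dvd _ (dvd_mul_right 2 m)]; exact Int.odd_iff.mp hy
  have ha_mod : y % (2 * m) % m = y % m := Int.emod_emod_of_dvd _ (dvd_mul_left m 2)
  have hs : y % m = 2 * (x % m) % m := hxy.trans ((Int.mod_modEq x m).mul_left 2).symm
  have hm2 := Int.odd_iff.mp hm
  rcases Int.emod_eq_self_or_sub ha.1 ha.2 with h1 | h1 <;>
  rcases Int.emod_eq_self_or_sub (a := 2 * (x % m)) (m := m) (by omega) (by omega) with h2 | h2 <;>
  omega

theorem Int.periodic_mul_pow_emod {n q : ℤ} {f : ℕ} (hq : q ^ f ≡ 1 [ZMOD n]) (t : ℤ) :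
    Periodic (fun i : ℕ => t * q ^ i % n) f := fun i => by
  simpa [Int.ModEq, pow_add, mul_assoc] using hq.mul_left (t * q ^ i)

theorem stmt_8_general (p m : ℕ) (hm : Odd m)
    (hcop : Nat.Coprime (2 * m) p)
    (f : ℕ) (hf : f = orderOf ((p : ZMod (2 * m))))
    (j : ℕ) (hj : ((p : ZMod m)) ^ j = 2) :
    ∀ t : ℤ, Int.gcd t (2 * m) = 1 →
      2 * ∑ i ∈ Finset.range f, (t * (p : ℤ) ^ i) % (2 * m) = (f : ℤ) * (2 * m) := by
  intro t hgcd
  have hp : Odd (p : ℤ) :=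
    (Int.odd_coe_nat p).mpr (Nat.coprime_mul_iff_left.mp hcop).1.odd_of_left
  have ht : Odd t :=
    Int.isCoprime_two_right.mp (Int.isCoprime_iff_gcd_eq_one.mpr hgcd).of_mul_right_left
  have hpf : (p : ℤ) ^ f ≡ 1 [ZMOD 2 * m] := by
    have := (ZMod.intCast_eq_intCast_iff ((p : ℤ) ^ f) 1 (2 * m)).mp
      (by push_cast; rw [hf]; exact pow_orderOf_eq_one _)
    exact_mod_cast this
  have hpj : (p : ℤ) ^ j ≡ 2 [ZMOD m] :=
    (ZMod.intCast_eq_intCast_iff _ _ _).mp (by push_cast; exact hj)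
  have key (i : ℕ) : t * p ^ (i + j) % (2 * m) + 2 * (t * p ^ i % m)
      = 2 * (t * p ^ (i + j) % m) + m :=
    Int.emod_two_mul_add_two_mul_emod (by exact_mod_cast hm.pos) (by exact_mod_cast hm)
      (ht.mul hp.pow) (by rw [pow_add, ← mul_assoc, mul_comm 2]; exact hpj.mul_left _)
  have hshift_two_m := (Int.periodic_mul_pow_emod hpf t).sum_range_comp_add j
  have hshift_m := (Int.periodic_mul_pow_emod (hpf.of_mul_left 2) t).sum_range_comp_add j
  have hsum := Finset.sum_congr rfl fun i (_ : i ∈ range f) => key i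
  simp only [sum_add_distrib, ← mul_sum, sum_const, card_range, nsmul_eq_mul] at hsum
  linarith

/-- If `N = 2m` with `m` odd and `2 ∈ ⟨p⟩ (mod m)`, then the Gauss sum `G_{p^f}(η_N)` is
pure (Stickelberger criterion). -/
theorem stmt_8 (p m : ℕ) (hp : p.Prime) (hp2 : p ≠ 2) (hm : Odd m)
    (hcop : Nat.Coprime (2 * m) p)
    (f : ℕ) (hf : f = orderOf ((p : ZMod (2 * m))))
    (j : ℕ) (hj : ((p : ZMod m)) ^ j = 2) :
    ∀ t : ℤ, Int.gcd t (2 * m) = 1 →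
      2 * ∑ i ∈ Finset.range f, (t * (p : ℤ) ^ i) % (2 * m) = (f : ℤ) * (2 * m) :=
  stmt_8_general p m hm hcop f hf j hj
end

section
/- Let q be a prime power with q ≡ 3 (mod 4), and let C₀ be the set of nonzero squares in F_q. Then C₀ is a skew Hadamard difference set in (F_q, +): C₀ ∩ (-C₀) = ∅, C₀ ∪ (-C₀) = F_q \ {0}, and every nonzero element of F_q arises exactly (q-3)/4 times as a difference of two distinct elements of C₀. -/
/-!
Since `q ≡ 3 (mod 4)`, `-1` is a nonsquare, so multiplicativity of the quadratic character
shows that exactly one of `x`, `-x` is a square for `x ≠ 0`.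

For the difference count, `(a, b) ↦ (a², b²)` is four-to-one from the solutions of
`a² - b² = g` with `a, b ≠ 0` onto the pairs of nonzero squares with difference `g`.
Putting `u = a + b`, so that `a - b = g / u`, the solutions of `a² - b² = g` correspond to the
`u ≠ 0`, and `b = 0` resp. `a = 0` exactly when `u² = g` resp. `u² = -g`. Exactly one of `±g` is
a square, so this excludes two values of `u`, leaving `q - 3` solutions with `a, b ≠ 0`.
-/

open Finset

theorem ringChar_ne_two_of_not_isSquare_neg_one {F : Type*} [Field F] [Fintype F]
    (hF : ¬IsSquare (-1 : F)) : ringChar F ≠ 2 :=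
  fun h => hF (FiniteField.isSquare_of_char_two h _)

section

variable {F : Type*} [Field F] [Fintype F] [DecidableEq F]

theorem isSquare_neg_iff_not_isSquare (hF : ¬IsSquare (-1 : F)) {x : F} (hx : x ≠ 0) :
    IsSquare (-x) ↔ ¬IsSquare x := by
  rw [← quadraticChar_neg_one_iff_not_isSquare,
    ← quadraticChar_one_iff_isSquare (neg_ne_zero.2 hx), neg_eq_neg_one_mul, map_mul,
    quadraticChar_neg_one_iff_not_isSquare.2 hF, neg_one_mul, neg_eq_iff_eq_neg]

variable (F) in
def nonzeroSquares : Finset F := univ.filter fun x => x ≠ 0 ∧ ∃ y, y ^ 2 = x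

theorem mem_nonzeroSquares {x : F} : x ∈ nonzeroSquares F ↔ x ≠ 0 ∧ IsSquare x := by
  simp [nonzeroSquares, isSquare_iff_exists_sq, eq_comm]

theorem neg_notMem_nonzeroSquares (hF : ¬IsSquare (-1 : F)) {x : F}
    (hx : x ∈ nonzeroSquares F) : -x ∉ nonzeroSquares F := by
  rw [mem_nonzeroSquares] at hx ⊢
  exact fun hnx => (isSquare_neg_iff_not_isSquare hF hx.1).1 hnx.2 hx.2

theorem mem_or_neg_mem_nonzeroSquares (hF : ¬IsSquare (-1 : F)) {x : F} (hx : x ≠ 0) :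
    x ∈ nonzeroSquares F ∨ -x ∈ nonzeroSquares F := by
  simp only [mem_nonzeroSquares, ne_eq, neg_eq_zero, hx, not_false_eq_true, true_and,
    isSquare_neg_iff_not_isSquare hF hx]
  exact em _

theorem card_filter_sq_eq (hF : ringChar F ≠ 2) (x : F) :
    (#{y : F | y ^ 2 = x} : ℤ) = quadraticChar F x + 1 := by
  rw [← quadraticChar_card_sqrts hF, Set.toFinset_ofPred]

theorem card_filter_sq_eq_of_isSquare (hF : ringChar F ≠ 2) {x : F} (hx : x ≠ 0)
    (hsq : IsSquare x) : #{y : F | y ^ 2 = x} = 2 := by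
  have h := card_filter_sq_eq hF x
  rw [(quadraticChar_one_iff_isSquare hx).2 hsq] at h
  omega

theorem card_filter_sq_eq_add_card_filter_sq_eq_neg (hF : ¬IsSquare (-1 : F)) (g : F) :
    #{y : F | y ^ 2 = g} + #{y : F | y ^ 2 = -g} = 2 := by
  have hchar := ringChar_ne_two_of_not_isSquare_neg_one hF
  have hneg : quadraticChar F (-g) = -quadraticChar F g := by
    rw [neg_eq_neg_one_mul, map_mul, quadraticChar_neg_one_iff_not_isSquare.2 hF, neg_one_mul]
  have h₁ := card_filter_sq_eq hchar g
  have h₂ := card_filter_sq_eq hchar (-g)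
  omega

theorem card_filter_ne_zero_sq_ne_add_three (hF : ¬IsSquare (-1 : F)) {g : F} (hg : g ≠ 0) :
    #{u : F | u ≠ 0 ∧ u ^ 2 ≠ g ∧ u ^ 2 ≠ -g} + 3 = Fintype.card F := by
  rw [← card_univ, ← card_filter_add_card_filter_not (s := univ)
    (p := fun u : F => u ≠ 0 ∧ u ^ 2 ≠ g ∧ u ^ 2 ≠ -g)]
  simp only [not_and_or, not_not, filter_or]
  rw [card_union_of_disjoint ?zero_disj, card_union_of_disjoint ?sq_disj,
    card_filter_sq_eq_add_card_filter_sq_eq_neg hF, filter_eq', if_pos (mem_univ _),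
    card_singleton]
  case zero_disj =>
    simp only [disjoint_left, mem_filter, mem_union, mem_univ, true_and]
    rintro u rfl (h | h) <;> simp_all
  case sq_disj =>
    refine disjoint_filter.2 fun u _ h h' => hg ?_
    have : (2 : F) * g = 0 := by linear_combination h' - h
    simpa [Ring.two_ne_zero (ringChar_ne_two_of_not_isSquare_neg_one hF)] using this

theorem card_sq_sub_sq_eq (hF : ringChar F ≠ 2) {g : F} (hg : g ≠ 0) :
    #{p : F × F | p.1 ≠ 0 ∧ p.2 ≠ 0 ∧ p.1 ^ 2 - p.2 ^ 2 = g} =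
      #{u : F | u ≠ 0 ∧ u ^ 2 ≠ g ∧ u ^ 2 ≠ -g} := by
  have h2 : (2 : F) ≠ 0 := Ring.two_ne_zero hF
  have hsum_ne_zero {a b : F} (h : a ^ 2 - b ^ 2 = g) : a + b ≠ 0 := fun h' =>
    hg (by rw [← h, show a = -b by linear_combination h']; ring)
  refine card_nbij' (fun p => p.1 + p.2)
    (fun u => ((u ^ 2 + g) / (2 * u), (u ^ 2 - g) / (2 * u))) ?_ ?_ ?_ ?_ <;>
    simp only [coe_filter, mem_univ, true_and]
  · rintro ⟨a, b⟩ ⟨ha, hb, hab⟩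
    have hu := hsum_ne_zero hab
    exact ⟨hu, fun h => mul_ne_zero (mul_ne_zero h2 hb) hu (by linear_combination h - hab),
      fun h => mul_ne_zero (mul_ne_zero h2 ha) hu (by linear_combination h + hab)⟩
  · rintro u ⟨hu, hpos, hneg⟩
    exact ⟨div_ne_zero (fun h => hneg (by linear_combination h)) (mul_ne_zero h2 hu),
      div_ne_zero (fun h => hpos (by linear_combination h)) (mul_ne_zero h2 hu),
      by field_simp; ring⟩
  · rintro ⟨a, b⟩ ⟨-, -, hab⟩
    have hu := hsum_ne_zero hab
    rw [← hab, Prod.mk.injEq]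
    constructor <;> field_simp <;> ring
  · rintro u ⟨hu, -, -⟩
    field_simp
    ring

theorem card_sq_sub_sq_eq_four_mul (hF : ringChar F ≠ 2) {g : F} (hg : g ≠ 0) :
    #{p : F × F | p.1 ≠ 0 ∧ p.2 ≠ 0 ∧ p.1 ^ 2 - p.2 ^ 2 = g} =
      4 * #{z ∈ nonzeroSquares F ×ˢ nonzeroSquares F | z.1 ≠ z.2 ∧ z.1 - z.2 = g} := by
  rw [card_eq_sum_card_fiberwise (f := fun p : F × F => (p.1 ^ 2, p.2 ^ 2)), mul_comm,
    ← smul_eq_mul, ← sum_const]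
  · refine sum_congr rfl fun z hz => ?_
    simp only [mem_filter, mem_product, mem_nonzeroSquares] at hz
    obtain ⟨⟨⟨hx, hxsq⟩, hy, hysq⟩, -, hxy⟩ := hz
    trans #(({a : F | a ^ 2 = z.1} : Finset F) ×ˢ ({b : F | b ^ 2 = z.2} : Finset F))
    · congr 1
      ext ⟨a, b⟩
      simp only [mem_filter, mem_univ, true_and, mem_product, Prod.ext_iff]
      refine ⟨fun h => h.2, fun ⟨ha, hb⟩ => ⟨⟨?_, ?_, by rw [ha, hb, hxy]⟩, ha, hb⟩⟩
      · rintro rfl; exact hx (by rw [← ha]; ring)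
      · rintro rfl; exact hy (by rw [← hb]; ring)
    rw [card_product, card_filter_sq_eq_of_isSquare hF hx hxsq,
      card_filter_sq_eq_of_isSquare hF hy hysq]
  · intro p hp
    simp only [coe_filter, mem_univ, true_and, Set.mem_ofPred_eq, mem_product,
      mem_nonzeroSquares] at hp ⊢
    obtain ⟨ha, hb, hab⟩ := hp
    exact ⟨⟨⟨pow_ne_zero 2 ha, p.1, sq _⟩, pow_ne_zero 2 hb, p.2, sq _⟩,
      fun h => hg (by rw [← hab, h, sub_self]), hab⟩

end

/-- The Paley difference set: for a prime power `q ≡ 3 (mod 4)`, the nonzero squares of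
`F_q` form a skew Hadamard difference set. -/
theorem stmt_12 (F : Type*) [Field F] [Fintype F] [DecidableEq F]
    (hq : Fintype.card F % 4 = 3) :
    (∀ x ∈ Finset.univ.filter (fun x : F => x ≠ 0 ∧ ∃ y, y ^ 2 = x),
        -x ∉ Finset.univ.filter (fun x : F => x ≠ 0 ∧ ∃ y, y ^ 2 = x)) ∧
    (∀ x : F, x ≠ 0 →
        x ∈ Finset.univ.filter (fun x : F => x ≠ 0 ∧ ∃ y, y ^ 2 = x) ∨
        -x ∈ Finset.univ.filter (fun x : F => x ≠ 0 ∧ ∃ y, y ^ 2 = x)) ∧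
    (∀ g : F, g ≠ 0 →
        (((Finset.univ.filter (fun x : F => x ≠ 0 ∧ ∃ y, y ^ 2 = x)) ×ˢ
          (Finset.univ.filter (fun x : F => x ≠ 0 ∧ ∃ y, y ^ 2 = x))).filter
            (fun z => z.1 ≠ z.2 ∧ z.1 - z.2 = g)).card = (Fintype.card F - 3) / 4) := by
  have hF : ¬IsSquare (-1 : F) := fun h => FiniteField.isSquare_neg_one_iff.1 h hq
  have hchar := ringChar_ne_two_of_not_isSquare_neg_one hF
  refine ⟨fun x hx => neg_notMem_nonzeroSquares hF hx,
    fun x hx => mem_or_neg_mem_nonzeroSquares hF hx, fun g hg => ?_⟩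
  show #{z ∈ nonzeroSquares F ×ˢ nonzeroSquares F | z.1 ≠ z.2 ∧ z.1 - z.2 = g} = _
  have hfour := card_sq_sub_sq_eq_four_mul hchar hg
  have hthree := card_filter_ne_zero_sq_ne_add_three hF hg
  rw [card_sq_sub_sq_eq hchar hg] at hfour
  omega
end

section
/- Let m be odd, p an odd prime coprime to 2m with multiplicative order f modulo 2m, and suppose 2 ≡ p^j (mod m) for some j. Then for every divisor m' of m, there exists j' with 2 ≡ p^{j'} (mod m'); consequently Σ_{i=0}^{f'-1}[t p^i]_{2m'} = f'·m' for all t coprime to 2m', where f' is the order of p mod 2m'. -/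
/-!
Since `m' ∣ m`, the relation `p ^ j = 2` descends from `ZMod m` to `ZMod m'`. For the sum put
`n = m'` and `a i = [t p^i]_n`. As `t p^(i+j) ≡ 2 t p^i (mod n)` and `t p^i` is odd,
`[t p^(i+j)]_{2n} = n + 2 a (i + j) - 2 a i`. Summed over a full period of `i ↦ p^i (mod 2n)`,
shifting the index by `j` changes no sum, so the `a`-terms cancel and the total is `f' n`.
-/

open Finset

theorem Function.Periodic.sum_range_add {M : Type*} [AddCancelCommMonoid M] {f : ℕ → M}
    {N : ℕ} (hf : Function.Periodic f N) (k : ℕ) :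
    ∑ i ∈ range N, f (i + k) = ∑ i ∈ range N, f i := by
  induction k with
  | zero => rfl
  | succ k ih =>
    rw [← ih]
    apply add_right_cancel (b := f k)
    calc ∑ i ∈ range N, f (i + (k + 1)) + f k = ∑ i ∈ range (N + 1), f (i + k) := by
          rw [sum_range_succ', zero_add]
          simp only [add_right_comm _ 1 k, add_assoc]
      _ = ∑ i ∈ range N, f (i + k) + f k := by rw [sum_range_succ, add_comm N, hf]

theorem Int.emod_two_mul_add_two_mul_emod_s17 {n x h : ℤ} (hn0 : 0 < n) (hn : Odd n) (hx : Odd x)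
    (hxh : x ≡ 2 * h [ZMOD n]) : x % (2 * n) + 2 * (h % n) = n + 2 * (x % n) := by
  obtain ⟨k, hk⟩ := hxh.dvd
  have hx_div := Int.emod_add_mul_ediv x n
  have hh_div := Int.emod_add_mul_ediv h n
  have hx_div₂ := Int.emod_add_mul_ediv x (2 * n)
  have hx_nonneg : 0 ≤ x % n := Int.emod_nonneg _ hn0.ne'
  have hx_lt : x % n < n := Int.emod_lt_of_pos _ hn0
  have hh_nonneg : 0 ≤ h % n := Int.emod_nonneg _ hn0.ne'
  have hh_lt : h % n < n := Int.emod_lt_of_pos _ hn0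
  have hx_nonneg₂ : 0 ≤ x % (2 * n) := Int.emod_nonneg _ (by omega)
  have hx_lt₂ : x % (2 * n) < 2 * n := Int.emod_lt_of_pos _ (by omega)
  have hx_odd₂ : x % (2 * n) % 2 = 1 := by
    rw [Int.emod_emod_of_dvd _ (dvd_mul_right 2 n)]
    exact Int.odd_iff.mp hx
  have hn_odd : n % 2 = 1 := Int.odd_iff.mp hn
  -- Both differences below are multiples of `n` lying in `(-n, 2n)`; parity then decides.
  set E := k - 2 * (h / n) + x / n
  set D := x / n - 2 * (x / (2 * n))
  have hE : 2 * (h % n) - x % n = n * E := by linear_combination 2 * hh_div - hx_div + hk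
  have hD : x % (2 * n) - x % n = n * D := by linear_combination hx_div₂ - hx_div
  have hE0 : 0 ≤ E := by nlinarith
  have hE1 : E ≤ 1 := by nlinarith
  have hD0 : 0 ≤ D := by nlinarith
  have hD1 : D ≤ 1 := by nlinarith
  interval_cases E <;> interval_cases D <;> omega

theorem sum_range_mul_pow_emod_two_mul {n u t : ℤ} (hn0 : 0 < n) (hn : Odd n) (hu : Odd u)
    (ht : Odd t) {j F : ℕ} (hj : u ^ j ≡ 2 [ZMOD n]) (hF : u ^ F ≡ 1 [ZMOD 2 * n]) :
    ∑ i ∈ range F, t * u ^ i % (2 * n) = F * n := by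
  have hper {N : ℤ} (hN : N ∣ 2 * n) : Function.Periodic (fun i ↦ t * u ^ i % N) F := by
    intro i
    have h := (hF.of_dvd hN).mul_left (t * u ^ i)
    rwa [mul_one, mul_assoc, ← pow_add] at h
  have hstep (i : ℕ) : t * u ^ (i + j) % (2 * n) + 2 * (t * u ^ i % n)
      = n + 2 * (t * u ^ (i + j) % n) := by
    refine Int.emod_two_mul_add_two_mul_emod_s17 hn0 hn (ht.mul hu.pow) ?_
    convert hj.mul_left (t * u ^ i) using 1 <;> ring
  have hsum := sum_congr rfl fun i (_ : i ∈ range F) ↦ hstep i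
  rw [sum_add_distrib, sum_add_distrib, ← mul_sum, ← mul_sum, sum_const, card_range,
    (hper (dvd_refl _)).sum_range_add, (hper (dvd_mul_left n 2)).sum_range_add] at hsum
  simp only [nsmul_eq_mul] at hsum
  linarith

theorem stmt_17_general (p m : ℕ) (hm : Odd m)
    (hcop : Nat.Coprime p (2 * m))
    (j : ℕ) (hj : ((p : ZMod m)) ^ j = 2) :
    ∀ m' : ℕ, m' ∣ m →
      (∃ j' : ℕ, ((p : ZMod m')) ^ j' = 2) ∧
      (∀ t : ℤ, Int.gcd t (2 * m') = 1 →
        ∑ i ∈ Finset.range (orderOf ((p : ZMod (2 * m')))),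
          (t * (p : ℤ) ^ i) % (2 * m') = (orderOf ((p : ZMod (2 * m'))) : ℤ) * m') := by
  intro m' hm'
  have hm'_odd : Odd m' := hm.of_dvd_nat hm'
  have hj' : (p : ZMod m') ^ j = 2 := by
    simpa only [map_pow, map_natCast, map_ofNat] using
      congrArg (ZMod.castHom hm' (ZMod m')) hj
  have hp_odd : Odd (p : ℤ) := by
    exact_mod_cast (Nat.Coprime.coprime_mul_right_right hcop).odd_of_right
  have hj_modEq : (p : ℤ) ^ j ≡ 2 [ZMOD m'] := by
    exact_mod_cast (ZMod.natCast_eq_natCast_iff _ _ _).mp (by push_cast; exact hj')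
  have horder_modEq : (p : ℤ) ^ orderOf (p : ZMod (2 * m')) ≡ 1 [ZMOD 2 * m'] := by
    exact_mod_cast (ZMod.natCast_eq_natCast_iff _ _ _).mp
      (by push_cast; exact pow_orderOf_eq_one (p : ZMod (2 * m')))
  refine ⟨⟨j, hj'⟩, fun t ht ↦ ?_⟩
  have ht_odd : Odd t :=
    Int.isCoprime_two_right.mp (Int.isCoprime_iff_gcd_eq_one.mpr ht).of_mul_right_left
  exact sum_range_mul_pow_emod_two_mul (by exact_mod_cast hm'_odd.pos) (by exact_mod_cast hm'_odd)
    hp_odd ht_odd hj_modEq horder_modEq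

/-- If `2 ∈ ⟨p⟩ (mod m)` with `m` odd, then `2 ∈ ⟨p⟩ (mod m')` for every divisor `m'` of
`m`, and consequently the Gauss sums of order `2m'` are pure (Stickelberger criterion). -/
theorem stmt_17 (p m : ℕ) (hp : p.Prime) (hp2 : p ≠ 2) (hm : Odd m)
    (hcop : Nat.Coprime p (2 * m))
    (f : ℕ) (hf : f = orderOf ((p : ZMod (2 * m))))
    (j : ℕ) (hj : ((p : ZMod m)) ^ j = 2) :
    ∀ m' : ℕ, m' ∣ m →
      (∃ j' : ℕ, ((p : ZMod m')) ^ j' = 2) ∧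
      (∀ t : ℤ, Int.gcd t (2 * m') = 1 →
        ∑ i ∈ Finset.range (orderOf ((p : ZMod (2 * m')))),
          (t * (p : ℤ) ^ i) % (2 * m') = (orderOf ((p : ZMod (2 * m'))) : ℤ) * m') :=
  stmt_17_general p m hm hcop j hj
end
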